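/- arXiv:2106.14629 — 2 statements merged into one kernel-verified Lean document; each statement's English description precedes it below -/
import Mathlib

section
/- Let c₄, c₅ be real constants and let K : ℝ → ℝ be three times differentiable with K(s) > 0 for all s in an open interval J, satisfying K'''(s) = 2(c₄ + c₅s)·K(s)^(−5/2). Let x : J → ℝ be twice differentiable satisfying x''(s) = −K(s)^(−5/2)·x(s)². Then the quantity I(s) := K(s)·x'(s)² − K'(s)·x(s)·x'(s) + (c₄ + c₅s)·x'(s) + (2/3)·K(s)^(−3/2)·x(s)³ + (K''(s)/2)·x(s)² − c₅·x(s) is constant on J. -/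
/-! Differentiating `I` and substituting `x'' = -K^(-5/2) x²` and `K''' = 2(c₄ + c₅ s) K^(-5/2)`,
all terms cancel once `K · K^(-5/2) = K^(-3/2)`; a function with vanishing derivative on an
interval is constant. -/

noncomputable def quadraticFirstIntegral (c₄ c₅ : ℝ) (K K' K'' x x' : ℝ → ℝ) (s : ℝ) : ℝ :=
  K s * (x' s) ^ 2 - K' s * x s * x' s + (c₄ + c₅ * s) * x' s
    + (2 / 3) * K s ^ (-(3 : ℝ) / 2) * (x s) ^ 3
    + (K'' s / 2) * (x s) ^ 2 - c₅ * x s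

theorem Real.rpow_neg_five_halves_eq_div {k : ℝ} (hk : k ≠ 0) :
    k ^ (-(5 : ℝ) / 2) = k ^ (-(3 : ℝ) / 2) / k := by
  rw [← Real.rpow_sub_one hk]
  norm_num

theorem hasDerivAt_quadraticFirstIntegral_zero {c₄ c₅ s : ℝ} {K K' K'' K''' x x' x'' : ℝ → ℝ}
    (hK : HasDerivAt K (K' s) s) (hK' : HasDerivAt K' (K'' s) s)
    (hK'' : HasDerivAt K'' (K''' s) s) (hKne : K s ≠ 0)
    (hKode : K''' s = 2 * (c₄ + c₅ * s) * K s ^ (-(5 : ℝ) / 2))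
    (hx : HasDerivAt x (x' s) s) (hx' : HasDerivAt x' (x'' s) s)
    (heom : x'' s = -(K s ^ (-(5 : ℝ) / 2) * (x s) ^ 2)) :
    HasDerivAt (quadraticFirstIntegral c₄ c₅ K K' K'' x x') 0 s := by
  have hlin : HasDerivAt (fun t : ℝ => c₄ + c₅ * t) c₅ s := by
    simpa using ((hasDerivAt_id s).const_mul c₅).const_add c₄
  have hrpow : HasDerivAt (fun t => K t ^ (-(3 : ℝ) / 2))
      (K' s * (-(3 : ℝ) / 2) * K s ^ (-(3 : ℝ) / 2 - 1)) s :=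
    hK.rpow_const (Or.inl hKne)
  have hI := (((((hK.mul (hx'.pow 2)).sub ((hK'.mul hx).mul hx')).add (hlin.mul hx')).add
    ((hrpow.const_mul (2 / 3 : ℝ)).mul (hx.pow 3))).add ((hK''.div_const 2).mul (hx.pow 2))).sub
    (hx.const_mul c₅)
  refine hI.congr_deriv ?_
  rw [Real.rpow_sub_one hKne, heom, hKode, Real.rpow_neg_five_halves_eq_div hKne]
  simp only [Pi.mul_apply, Pi.pow_apply]
  field_simp
  ring

/-- The quadratic first integral of `x'' = −K^(−5/2) x²` where
`K''' = 2(c₄ + c₅ s)K^(−5/2)` on an open interval with `K > 0`. -/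
theorem mu_two_QFI (c₄ c₅ : ℝ) (a b : ℝ)
    (K K' K'' K''' : ℝ → ℝ)
    (hK : ∀ s ∈ Set.Ioo a b, HasDerivAt K (K' s) s)
    (hK' : ∀ s ∈ Set.Ioo a b, HasDerivAt K' (K'' s) s)
    (hK'' : ∀ s ∈ Set.Ioo a b, HasDerivAt K'' (K''' s) s)
    (hKpos : ∀ s ∈ Set.Ioo a b, 0 < K s)
    (hKode : ∀ s ∈ Set.Ioo a b, K''' s = 2 * (c₄ + c₅ * s) * K s ^ (-(5 : ℝ) / 2))
    (x x' x'' : ℝ → ℝ)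
    (hx : ∀ s ∈ Set.Ioo a b, HasDerivAt x (x' s) s)
    (hx' : ∀ s ∈ Set.Ioo a b, HasDerivAt x' (x'' s) s)
    (heom : ∀ s ∈ Set.Ioo a b, x'' s = -(K s ^ (-(5 : ℝ) / 2) * (x s) ^ 2)) :
    ∀ s₁ ∈ Set.Ioo a b, ∀ s₂ ∈ Set.Ioo a b,
      K s₁ * (x' s₁) ^ 2 - K' s₁ * x s₁ * x' s₁ + (c₄ + c₅ * s₁) * x' s₁
        + (2 / 3) * K s₁ ^ (-(3 : ℝ) / 2) * (x s₁) ^ 3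
        + (K'' s₁ / 2) * (x s₁) ^ 2 - c₅ * x s₁
      = K s₂ * (x' s₂) ^ 2 - K' s₂ * x s₂ * x' s₂ + (c₄ + c₅ * s₂) * x' s₂
        + (2 / 3) * K s₂ ^ (-(3 : ℝ) / 2) * (x s₂) ^ 3
        + (K'' s₂ / 2) * (x s₂) ^ 2 - c₅ * x s₂ := by
  have hI : ∀ s ∈ Set.Ioo a b,
      HasDerivAt (quadraticFirstIntegral c₄ c₅ K K' K'' x x') 0 s := fun s hs =>
    hasDerivAt_quadraticFirstIntegral_zero (hK s hs) (hK' s hs) (hK'' s hs) (hKpos s hs).ne'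
      (hKode s hs) (hx s hs) (hx' s hs) (heom s hs)
  intro s₁ hs₁ s₂ hs₂
  exact isOpen_Ioo.is_const_of_deriv_eq_zero isPreconnected_Ioo
    (fun s hs => (hI s hs).differentiableAt.differentiableWithinAt)
    (fun s hs => (hI s hs).deriv) hs₁ hs₂
end

section
/- Let c₁, c₂, c₃ be real constants and set K₁₁(s) := c₁ + c₂s + c₃s². Let ω̄ : ℝ → ℝ be differentiable and let b₁ : ℝ → ℝ be twice differentiable satisfying b₁''(s) = 2ω̄'(s)·K₁₁(s) + 3ω̄(s)·K₁₁'(s) for all s. Let B be an antiderivative of b₁·ω̄ (B' = b₁·ω̄). Let x : ℝ → ℝ be twice differentiable satisfying x''(s) = −ω̄(s). Then the quantity I(s) := K₁₁(s)·x'(s)² − K₁₁'(s)·x(s)·x'(s) + b₁(s)·x'(s) + c₃·x(s)² + 2ω̄(s)·K₁₁(s)·x(s) − b₁'(s)·x(s) + B(s) is constant in s. -/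
/-!
Along a solution of `x'' = -ω`, the derivative of the candidate integral collapses to
`(2 c₃ - K'') x x' + x (2 ω' K + 3 ω K' - b₁'')`. The first term vanishes because `K` is
quadratic with leading coefficient `c₃`, the second by the compatibility condition, so the
quantity has zero derivative on all of `ℝ` and is therefore constant.
-/

theorem hasDerivAt_quadratic (c₁ c₂ c₃ s : ℝ) :
    HasDerivAt (fun s : ℝ => c₁ + c₂ * s + c₃ * s ^ 2) (c₂ + 2 * c₃ * s) s := by
  have := (((hasDerivAt_id s).const_mul c₂).const_add c₁).add
    ((hasDerivAt_pow 2 s).const_mul c₃)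
  exact this.congr_deriv (by norm_num; ring)

theorem hasDerivAt_quadFirstIntegral {K K' ω ω' b₁ b₁' b₁'' B x x' : ℝ → ℝ} {c s : ℝ}
    (hK : HasDerivAt K (K' s) s) (hK' : HasDerivAt K' (2 * c) s)
    (hω : HasDerivAt ω (ω' s) s)
    (hb₁ : HasDerivAt b₁ (b₁' s) s) (hb₁' : HasDerivAt b₁' (b₁'' s) s)
    (hB : HasDerivAt B (b₁ s * ω s) s)
    (hx : HasDerivAt x (x' s) s) (hx' : HasDerivAt x' (-ω s) s) :
    HasDerivAt
      (fun s => K s * x' s ^ 2 - K' s * x s * x' s + b₁ s * x' s + c * x s ^ 2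
        + 2 * ω s * K s * x s - b₁' s * x s + B s)
      (x s * (2 * ω' s * K s + 3 * ω s * K' s - b₁'' s)) s := by
  have := ((((((hK.mul (hx'.pow 2)).sub ((hK'.mul hx).mul hx')).add (hb₁.mul hx')).add
    ((hx.pow 2).const_mul c)).add (((hω.const_mul 2).mul hK).mul hx)).sub (hb₁'.mul hx)).add hB
  exact this.congr_deriv (by norm_num; ring)

/-- The quadratic first integral of `x'' = −ω̄(s)` (the case `μ = 0`), for arbitrary
differentiable `ω̄` with the compatibility condition `b₁'' = 2ω̄'K₁₁ + 3ω̄K₁₁'`,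
`K₁₁(s) = c₁ + c₂ s + c₃ s²`, and `B' = b₁ ω̄`. -/
theorem mu_zero_QFI (c₁ c₂ c₃ : ℝ)
    (ω ω' : ℝ → ℝ) (hω : ∀ s, HasDerivAt ω (ω' s) s)
    (b₁ b₁' b₁'' : ℝ → ℝ)
    (hb₁ : ∀ s, HasDerivAt b₁ (b₁' s) s)
    (hb₁' : ∀ s, HasDerivAt b₁' (b₁'' s) s)
    (hcomp : ∀ s, b₁'' s = 2 * ω' s * (c₁ + c₂ * s + c₃ * s ^ 2)
      + 3 * ω s * (c₂ + 2 * c₃ * s))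
    (B : ℝ → ℝ) (hB : ∀ s, HasDerivAt B (b₁ s * ω s) s)
    (x x' x'' : ℝ → ℝ)
    (hx : ∀ s, HasDerivAt x (x' s) s)
    (hx' : ∀ s, HasDerivAt x' (x'' s) s)
    (heom : ∀ s, x'' s = -ω s) :
    ∀ s₁ s₂,
      (c₁ + c₂ * s₁ + c₃ * s₁ ^ 2) * (x' s₁) ^ 2
        - (c₂ + 2 * c₃ * s₁) * x s₁ * x' s₁ + b₁ s₁ * x' s₁ + c₃ * (x s₁) ^ 2
        + 2 * ω s₁ * (c₁ + c₂ * s₁ + c₃ * s₁ ^ 2) * x s₁ - b₁' s₁ * x s₁ + B s₁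
      = (c₁ + c₂ * s₂ + c₃ * s₂ ^ 2) * (x' s₂) ^ 2
        - (c₂ + 2 * c₃ * s₂) * x s₂ * x' s₂ + b₁ s₂ * x' s₂ + c₃ * (x s₂) ^ 2
        + 2 * ω s₂ * (c₁ + c₂ * s₂ + c₃ * s₂ ^ 2) * x s₂ - b₁' s₂ * x s₂ + B s₂ := by
  have hderiv : ∀ s, HasDerivAt
      (fun s => (c₁ + c₂ * s + c₃ * s ^ 2) * x' s ^ 2 - (c₂ + 2 * c₃ * s) * x s * x' s
        + b₁ s * x' s + c₃ * x s ^ 2 + 2 * ω s * (c₁ + c₂ * s + c₃ * s ^ 2) * x s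
        - b₁' s * x s + B s) 0 s := fun s => by
    have hK' : HasDerivAt (fun s : ℝ => c₂ + 2 * c₃ * s) (2 * c₃) s := by
      simpa using ((hasDerivAt_id s).const_mul (2 * c₃)).const_add c₂
    have := hasDerivAt_quadFirstIntegral (hasDerivAt_quadratic c₁ c₂ c₃ s) hK' (hω s)
      (hb₁ s) (hb₁' s) (hB s) (hx s) (heom s ▸ hx' s)
    rwa [hcomp, sub_self, mul_zero] at this
  exact is_const_of_deriv_eq_zero (fun s => (hderiv s).differentiableAt)
    (fun s => (hderiv s).deriv)
end
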